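/- Let p be an odd prime, n ≥ 1, and λ a unit of ZMod (p^n) with λ^(p^n) = 1; let G = G(λ,n,n) and let π : G → G/Φ(G) be the quotient map by the Frattini subgroup. Let x, y, z, a, b, c ∈ G satisfy x*y*z = 1 and a*b*c = 1. Then ((x,y,z),(a,b,c)) is an unmixed Beauville structure on G if and only if ((π x, π y, π z),(π a, π b, π c)) is an unmixed Beauville structure on G/Φ(G). -/

import Mathlib

def IsBeauvilleStructure {G : Type*} [Group G] (x y z a b c : G) : Prop :=
  x * y * z = 1 ∧ a * b * c = 1 ∧
  Subgroup.closure {x, y, z} = ⊤ ∧ Subgroup.closure {a, b, c} = ⊤ ∧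
  ∀ u ∈ ({x, y, z} : Set G), ∀ v ∈ ({a, b, c} : Set G), ∀ g : G, ∀ i j : ℤ,
    u ^ i = g * v ^ j * g⁻¹ → u ^ i = 1

/-- The homomorphism `ZMod (p^n) → (ZMod (p^m))ˣ` sending (the class of) `x` to `λ^x`,
well-defined since `λ^(p^n) = 1`. -/
def zmodUnitHom (p m n : ℕ) (lam : (ZMod (p^m))ˣ) (h : lam ^ (p^n) = 1) :
    Multiplicative (ZMod (p^n)) →* (ZMod (p^m))ˣ :=
  AddMonoidHom.toMultiplicativeLeft
    (ZMod.lift (p^n) ⟨(zmultiplesHom (Additive (ZMod (p^m))ˣ)) (Additive.ofMul lam), by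
      show ((p^n : ℕ) : ℤ) • Additive.ofMul lam = 0
      rw [← ofMul_zpow, zpow_natCast, h]
      rfl⟩)

/-- Additive automorphisms of `R` as multiplicative automorphisms of `Multiplicative R`. -/
def addAutToMulAut (R : Type*) [AddZeroClass R] :
    Multiplicative (AddAut R) →* MulAut (Multiplicative R) where
  toFun e := AddEquiv.toMultiplicative e.toAdd
  map_one' := rfl
  map_mul' _ _ := rfl

/-- The action of `ZMod (p^n)` on `ZMod (p^m)` where `x` acts by multiplication by `λ^x`. -/
def beauvilleAut (p m n : ℕ) (lam : (ZMod (p^m))ˣ) (h : lam ^ (p^n) = 1) :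
    Multiplicative (ZMod (p^n)) →* MulAut (Multiplicative (ZMod (p^m))) :=
  ((addAutToMulAut (ZMod (p^m))).comp AddAut.mulLeft).comp (zmodUnitHom p m n lam h)

/-- The semidirect product `G(λ,m,n) = ZMod (p^m) ⋊_λ ZMod (p^n)`. -/
abbrev BeauvilleGroup (p m n : ℕ) (lam : (ZMod (p^m))ˣ) (h : lam ^ (p^n) = 1) :=
  SemidirectProduct (Multiplicative (ZMod (p^m))) (Multiplicative (ZMod (p^n)))
    (beauvilleAut p m n lam h)

/-!
Let `P = p ^ (n - 1)`. From `λ ^ (p ^ n) = 1` we get `λ ≡ 1 mod p`, and since `p` is odd the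
geometric sum `1 + μ + ⋯ + μ ^ (p - 1)` for `μ ≡ 1 mod p` is `p` times a unit `≡ 1 mod p`; hence
`(a, x) ^ P = (P a, P x)`. So `g ↦ g ^ P` is a homomorphism into the centre whose kernel is the set
of `(a, x)` with `p ∣ a` and `p ∣ x`, and every element has order dividing `p ^ n`. This kernel is
`Φ(G)`: its elements are products of `p`-th powers, which lie in every maximal subgroup of a
`p`-group, and it is the intersection of the kernels of the two coordinates mod `p`.

Generation passes between `G` and `G/Φ(G)` since `Φ(G)` consists of non-generators, and a
generating triple of the non-cyclic group `G/Φ(G)` has no trivial entry. If `u ^ i = g v ^ j g⁻¹`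
is nontrivial, then `u ^ P` is a power of `u ^ i`, hence conjugate to a power of `v`, and in turn
the central element `v ^ P` is a power of `u ^ P`; so `π v` is a power of `π u`, which the
condition in the quotient forbids.
-/

open Finset Multiplicative Subgroup

section GeneratingTriples

variable {Q : Type*} [Group Q] {x y z : Q}

theorem left_ne_one_of_closure_eq_top (hQ : ¬IsCyclic Q) (hxyz : x * y * z = 1)
    (hgen : closure {x, y, z} = ⊤) : x ≠ 1 := by
  rintro rfl
  have hz : z = y⁻¹ := eq_inv_of_mul_eq_one_right (by simpa using hxyz)
  refine hQ (isCyclic_iff_exists_zpowers_eq_top.2 ⟨y, top_unique ?_⟩)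
  rw [← hgen, closure_le]
  rintro w (rfl | rfl | rfl)
  · exact one_mem _
  · exact mem_zpowers _
  · exact hz ▸ inv_mem (mem_zpowers _)

theorem ne_one_of_mem_of_closure_eq_top (hQ : ¬IsCyclic Q) (hxyz : x * y * z = 1)
    (hgen : closure {x, y, z} = ⊤) : ∀ w ∈ ({x, y, z} : Set Q), w ≠ 1 := by
  have hyzx : y * z * x = 1 := by rwa [mul_eq_one_comm, ← mul_assoc]
  have hzxy : z * x * y = 1 := by rwa [mul_eq_one_comm, ← mul_assoc]
  have hrot (a b c : Q) : ({b, c, a} : Set Q) = {a, b, c} := by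
    ext
    simp only [Set.mem_insert_iff, Set.mem_singleton_iff]
    tauto
  simp only [Set.mem_insert_iff, Set.mem_singleton_iff, forall_eq_or_imp, forall_eq]
  exact ⟨left_ne_one_of_closure_eq_top hQ hxyz hgen,
    left_ne_one_of_closure_eq_top hQ hyzx (by rwa [hrot]),
    left_ne_one_of_closure_eq_top hQ hzxy (by rwa [hrot y z x, hrot x y z])⟩

end GeneratingTriples

section Frattini

variable {G : Type*} [Group G]

theorem closure_image_mk_frattini_eq_top_iff [Finite G] {s : Set G} :
    closure (((↑) : G → G ⧸ frattini G) '' s) = ⊤ ↔ closure s = ⊤ := by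
  rw [← QuotientGroup.coe_mk', ← MonoidHom.map_closure]
  refine ⟨fun hs => frattini_nongenerating ?_, fun hs => ?_⟩
  · rw [sup_comm, ← QuotientGroup.comap_map_mk', hs, comap_top]
  · rw [hs]
    exact map_top_of_surjective _ (QuotientGroup.mk'_surjective _)

theorem isCyclic_of_isCyclic_quotient_frattini [Finite G] (h : IsCyclic (G ⧸ frattini G)) :
    IsCyclic G := by
  obtain ⟨w, hw⟩ := isCyclic_iff_exists_zpowers_eq_top.1 h
  obtain ⟨g, rfl⟩ := QuotientGroup.mk_surjective w
  refine isCyclic_iff_exists_zpowers_eq_top.2 ⟨g, ?_⟩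
  rw [zpowers_eq_closure, ← closure_image_mk_frattini_eq_top_iff, Set.image_singleton,
    ← zpowers_eq_closure, hw]

theorem QuotientGroup.eq_bot_or_eq_top_of_isCoatom {M : Subgroup G} [M.Normal] (hM : IsCoatom M)
    (H : Subgroup (G ⧸ M)) : H = ⊥ ∨ H = ⊤ := by
  have hsurj := QuotientGroup.mk'_surjective M
  rcases hM.le_iff.1 (QuotientGroup.le_comap_mk' M H) with hH | hH
  · exact Or.inr (comap_injective hsurj (by rw [hH, comap_top]))
  · exact Or.inl (comap_injective hsurj (by rw [hH, MonoidHom.comap_bot, QuotientGroup.ker_mk']))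

theorem IsPGroup.pow_eq_one_of_forall_eq_bot_or_eq_top {p : ℕ} [Fact p.Prime]
    (hG : IsPGroup p G) (hsub : ∀ H : Subgroup G, H = ⊥ ∨ H = ⊤) (g : G) : g ^ p = 1 := by
  rcases hsub (zpowers (g ^ p)) with hbot | htop
  · exact zpowers_eq_bot.1 hbot
  · obtain ⟨k, hk⟩ := mem_zpowers_iff.1 (htop ▸ mem_top g)
    have hdvd : (orderOf g : ℤ) ∣ p * k - 1 := by
      rw [orderOf_dvd_iff_zpow_eq_one, zpow_sub_one, zpow_mul, zpow_natCast, hk, mul_inv_cancel]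
    by_contra hg
    have hpk : (p : ℤ) ∣ p * k - 1 :=
      (Int.natCast_dvd_natCast.2 (hG.dvd_orderOf fun h1 => hg (by rw [h1, one_pow]))).trans hdvd
    have : (p : ℤ) ∣ 1 := by simpa using dvd_sub (dvd_mul_right (p : ℤ) k) hpk
    exact (Fact.out : p.Prime).not_dvd_one (by exact_mod_cast this)

theorem IsPGroup.pow_mem_of_isCoatom [Finite G] {p : ℕ} [Fact p.Prime] (hG : IsPGroup p G)
    {M : Subgroup G} (hM : IsCoatom M) (g : G) : g ^ p ∈ M := by
  have := hG.isNilpotent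
  have : M.Normal :=
    NormalizerCondition.normal_of_coatom M Group.normalizerCondition_of_isNilpotent hM
  rw [← QuotientGroup.eq_one_iff, QuotientGroup.mk_pow]
  exact (hG.to_quotient M).pow_eq_one_of_forall_eq_bot_or_eq_top
    (QuotientGroup.eq_bot_or_eq_top_of_isCoatom hM) _

theorem IsPGroup.pow_mem_frattini [Finite G] {p : ℕ} [Fact p.Prime] (hG : IsPGroup p G) (g : G) :
    g ^ p ∈ frattini G := by
  simp only [frattini, Order.radical, mem_iInf]
  exact fun M hM => hG.pow_mem_of_isCoatom hM g

theorem MonoidHom.isCoatom_ker_of_surjective {H : Type*} [CommGroup H] {f : G →* H}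
    (hf : Function.Surjective f) (hH : (Nat.card H).Prime) : IsCoatom f.ker := by
  have : IsSimpleGroup H := CommGroup.is_simple_iff_prime_card.2 hH
  rw [← MonoidHom.comap_bot]
  exact isCoatom_comap_of_surjective hf isCoatom_bot

end Frattini

def PowersConjDisjoint {G : Type*} [Group G] (u v : G) : Prop :=
  ∀ g : G, ∀ i j : ℤ, u ^ i = g * v ^ j * g⁻¹ → u ^ i = 1

theorem exists_zpow_eq_pow_prime_pow {G : Type*} [Group G] {p k : ℕ} (hp : p.Prime) {u : G}
    (hu : u ^ p ^ (k + 1) = 1) {i : ℤ} (hi : u ^ i ≠ 1) : ∃ m : ℤ, (u ^ i) ^ m = u ^ p ^ k := by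
  -- `gcd(i, p ^ (k + 1))` is a proper divisor of `p ^ (k + 1)`, hence divides `p ^ k`,
  -- and by Bézout `u ^ gcd(i, p ^ (k + 1))` is a power of `u ^ i`
  have hd : Int.gcd i (p ^ (k + 1) : ℕ) ∣ p ^ k := by
    obtain ⟨s, hs, hds⟩ :=
      (Nat.dvd_prime_pow hp).1 (Int.natCast_dvd_natCast.1 (Int.gcd_dvd_right i (p ^ (k + 1) : ℕ)))
    rcases hs.lt_or_eq with hs | rfl
    · exact hds ▸ pow_dvd_pow p (Nat.lt_succ_iff.1 hs)
    · refine absurd ?_ hi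
      obtain ⟨c, hc⟩ := hds ▸ Int.gcd_dvd_left i (p ^ (k + 1) : ℕ)
      rw [hc, zpow_mul, zpow_natCast, hu, one_zpow]
  obtain ⟨c, hc⟩ := hd
  refine ⟨i.gcdA (p ^ (k + 1) : ℕ) * c, ?_⟩
  rw [← zpow_mul, ← zpow_natCast, hc, Nat.cast_mul, Int.gcd_eq_gcd_ab, add_mul, zpow_add,
    mul_assoc, mul_assoc, zpow_mul u (p ^ (k + 1) : ℕ), zpow_natCast, hu, one_zpow, mul_one]

section PowerQuotient

variable {G : Type*} [Group G] {N : Subgroup G} {e : ℕ}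

theorem QuotientGroup.mk_eq_mk_iff_pow_eq_pow (hmul : ∀ a b : G, (a * b) ^ e = a ^ e * b ^ e)
    (hN : ∀ a : G, a ∈ N ↔ a ^ e = 1) (a b : G) : (a : G ⧸ N) = b ↔ a ^ e = b ^ e := by
  rw [QuotientGroup.eq, hN, hmul, inv_pow, inv_mul_eq_one]

theorem PowersConjDisjoint.quotient [N.Normal] (hmul : ∀ a b : G, (a * b) ^ e = a ^ e * b ^ e)
    (hN : ∀ a : G, a ∈ N ↔ a ^ e = 1) {u v : G} (huv : PowersConjDisjoint u v) :
    PowersConjDisjoint (u : G ⧸ N) (v : G ⧸ N) := by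
  intro g' i j hrel
  obtain ⟨g, rfl⟩ := QuotientGroup.mk_surjective g'
  have hpow : (u ^ i) ^ e = (g * v ^ j * g⁻¹) ^ e :=
    (QuotientGroup.mk_eq_mk_iff_pow_eq_pow hmul hN _ _).1 (by simpa using hrel)
  rw [← QuotientGroup.mk_zpow, QuotientGroup.eq_one_iff, hN, ← zpow_natCast, ← zpow_mul]
  refine huv g _ (j * e) ?_
  rw [zpow_mul, zpow_mul, zpow_natCast, zpow_natCast, hpow, conj_pow]

theorem PowersConjDisjoint.of_quotient [N.Normal] {p k : ℕ} (hp : p.Prime)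
    (hmul : ∀ a b : G, (a * b) ^ p ^ k = a ^ p ^ k * b ^ p ^ k)
    (hcentral : ∀ a b : G, a ^ p ^ k * b = b * a ^ p ^ k) (hexp : ∀ a : G, a ^ p ^ (k + 1) = 1)
    (hN : ∀ a : G, a ∈ N ↔ a ^ p ^ k = 1) {u v : G} (hu : (u : G ⧸ N) ≠ 1)
    (hv : (v : G ⧸ N) ≠ 1) (huv : PowersConjDisjoint (u : G ⧸ N) (v : G ⧸ N)) :
    PowersConjDisjoint u v := by
  intro g i j hrel
  by_contra hne
  obtain ⟨m, hm⟩ := exists_zpow_eq_pow_prime_pow hp (hexp u) hne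
  have hconj : u ^ p ^ k = g * v ^ (j * m) * g⁻¹ := by rw [← hm, hrel, conj_zpow, zpow_mul]
  have hvjm : v ^ (j * m) ≠ 1 := by
    rintro h1
    rw [h1, mul_one, mul_inv_cancel, ← hN, ← QuotientGroup.eq_one_iff] at hconj
    exact hu hconj
  obtain ⟨m', hm'⟩ := exists_zpow_eq_pow_prime_pow hp (hexp v) hvjm
  have hvu : v ^ p ^ k = (u ^ m') ^ p ^ k :=
    calc v ^ p ^ k = g * v ^ p ^ k * g⁻¹ := by rw [← hcentral, mul_inv_cancel_right]
      _ = (u ^ p ^ k) ^ m' := by rw [hconj, conj_zpow, hm']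
      _ = (u ^ m') ^ p ^ k := by
        rw [← zpow_natCast, ← zpow_natCast, ← zpow_mul, ← zpow_mul, mul_comm]
  have hvu' : (v : G ⧸ N) = (u : G ⧸ N) ^ m' := by
    rw [← QuotientGroup.mk_zpow, QuotientGroup.mk_eq_mk_iff_pow_eq_pow hmul hN, hvu]
  apply hv
  rw [hvu']
  exact huv 1 m' 1 (by rw [one_mul, inv_one, mul_one, zpow_one, hvu'])

end PowerQuotient

theorem isBeauvilleStructure_iff {G : Type*} [Group G] {x y z a b c : G} :
    IsBeauvilleStructure x y z a b c ↔ x * y * z = 1 ∧ a * b * c = 1 ∧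
      closure {x, y, z} = ⊤ ∧ closure {a, b, c} = ⊤ ∧
      ∀ u ∈ ({x, y, z} : Set G), ∀ v ∈ ({a, b, c} : Set G), PowersConjDisjoint u v :=
  Iff.rfl

theorem isBeauvilleStructure_iff_frattini_quotient {G : Type*} [Group G] [Finite G] {p k : ℕ}
    (hp : p.Prime) (hG : ¬IsCyclic G) (hmul : ∀ a b : G, (a * b) ^ p ^ k = a ^ p ^ k * b ^ p ^ k)
    (hcentral : ∀ a b : G, a ^ p ^ k * b = b * a ^ p ^ k) (hexp : ∀ a : G, a ^ p ^ (k + 1) = 1)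
    (hΦ : ∀ a : G, a ∈ frattini G ↔ a ^ p ^ k = 1) {x y z a b c : G}
    (hxyz : x * y * z = 1) (habc : a * b * c = 1) :
    IsBeauvilleStructure x y z a b c ↔
      IsBeauvilleStructure (QuotientGroup.mk' (frattini G) x) (QuotientGroup.mk' (frattini G) y)
        (QuotientGroup.mk' (frattini G) z) (QuotientGroup.mk' (frattini G) a)
        (QuotientGroup.mk' (frattini G) b) (QuotientGroup.mk' (frattini G) c) := by
  simp only [QuotientGroup.mk'_apply, isBeauvilleStructure_iff]
  have himage (x y z : G) :
      ({(x : G ⧸ frattini G), ↑y, ↑z} : Set _) = (↑) '' ({x, y, z} : Set G) := by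
    simp only [Set.image_insert_eq, Set.image_singleton]
  have hmk {x y z : G} (h : x * y * z = 1) : (x * y * z : G ⧸ frattini G) = 1 := by
    rw [← QuotientGroup.mk_mul, ← QuotientGroup.mk_mul, h, QuotientGroup.mk_one]
  have hne {x y z : G} (h : x * y * z = 1) (hgen : closure {x, y, z} = ⊤) :
      ∀ u ∈ ({x, y, z} : Set G), (u : G ⧸ frattini G) ≠ 1 := fun u hu =>
    ne_one_of_mem_of_closure_eq_top (mt isCyclic_of_isCyclic_quotient_frattini hG) (hmk h)
      (by rwa [himage, closure_image_mk_frattini_eq_top_iff]) u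
      (himage x y z ▸ Set.mem_image_of_mem _ hu)
  simp only [himage, Set.forall_mem_image, closure_image_mk_frattini_eq_top_iff, hxyz, habc,
    hmk hxyz, hmk habc, true_and]
  exact and_congr_right fun hgen₁ => and_congr_right fun hgen₂ =>
    forall₂_congr fun u hu => forall₂_congr fun v hv =>
      ⟨PowersConjDisjoint.quotient hmul hΦ,
        PowersConjDisjoint.of_quotient hp hmul hcentral hexp hΦ (hne hxyz hgen₁ u hu)
          (hne habc hgen₂ v hv)⟩

theorem ZMod.castHom_eq_zero_iff_dvd {d q : ℕ} [NeZero q] (hd : d ∣ q) (a : ZMod q) :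
    ZMod.castHom hd (ZMod d) a = 0 ↔ (d : ZMod q) ∣ a := by
  refine ⟨fun ha => ?_, ?_⟩
  · rw [ZMod.castHom_apply, ZMod.cast_eq_val, ZMod.natCast_eq_zero_iff] at ha
    obtain ⟨c, hc⟩ := ha
    exact ⟨c, by rw [← ZMod.natCast_zmod_val a, hc, Nat.cast_mul]⟩
  · rintro ⟨c, rfl⟩
    rw [map_mul, map_natCast, ZMod.natCast_self, zero_mul]

theorem ZMod.natCast_pow_self_eq_zero {p n : ℕ} : (p : ZMod (p ^ n)) ^ n = 0 := by
  rw [← Nat.cast_pow, ZMod.natCast_self]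

theorem ZMod.prime_pow_pred_mul_eq_zero_iff {p n : ℕ} [NeZero p] (hn : n ≠ 0)
    (a : ZMod (p ^ n)) : (p : ZMod (p ^ n)) ^ (n - 1) * a = 0 ↔ (p : ZMod (p ^ n)) ∣ a := by
  have hpn : p ^ (n - 1) * p = p ^ n := by
    rw [← pow_succ, Nat.sub_add_cancel (Nat.pos_of_ne_zero hn)]
  refine ⟨fun ha => ?_, ?_⟩
  · rw [← ZMod.natCast_zmod_val a, ← Nat.cast_pow, ← Nat.cast_mul, ZMod.natCast_eq_zero_iff] at ha
    obtain ⟨c, hc⟩ := Nat.dvd_of_mul_dvd_mul_left (pow_pos (Nat.pos_of_ne_zero (NeZero.ne p)) _)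
      ((dvd_of_eq hpn).trans ha)
    exact ⟨c, by rw [← ZMod.natCast_zmod_val a, hc, Nat.cast_mul]⟩
  · rintro ⟨c, rfl⟩
    rw [← mul_assoc, ← pow_succ, Nat.sub_add_cancel (Nat.pos_of_ne_zero hn),
      ZMod.natCast_pow_self_eq_zero, zero_mul]

theorem exists_geom_sum_eq_of_dvd_sub_one {R : Type*} [CommRing R] {p : ℕ} (hodd : Odd p)
    {μ : R} (hμ : (p : R) ∣ μ - 1) : ∃ w, ∑ i ∈ range p, μ ^ i = p * (1 + p * w) := by
  obtain ⟨b, hb⟩ := hμ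
  obtain ⟨w, hw⟩ := odd_sq_dvd_geom_sum₂_sub (1 : R) b hodd
  simp only [one_pow, mul_one] at hw
  exact ⟨w, by rw [sub_eq_iff_eq_add'.1 hb]; linear_combination hw⟩

theorem zmodUnitHom_ofAdd {p m n : ℕ} [NeZero p] {u : (ZMod (p ^ m))ˣ} (hu : u ^ p ^ n = 1)
    (x : ZMod (p ^ n)) :
    zmodUnitHom p m n u hu (ofAdd x) = u ^ x.val := by
  conv_lhs => rw [← ZMod.natCast_zmod_val x, ← Int.cast_natCast]
  simp only [zmodUnitHom, AddMonoidHom.coe_toMultiplicativeLeft, Function.comp_apply, toAdd_ofAdd,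
    ZMod.lift_coe, zmultiplesHom_apply, natCast_zsmul]
  rfl

section UnitsOfPrimePowerOrder

variable {p m n : ℕ} [Fact p.Prime]

theorem ZMod.castHom_unit_eq_one_of_pow_eq_one (hm : m ≠ 0) {u : (ZMod (p ^ m))ˣ}
    (hu : u ^ p ^ n = 1) : ZMod.castHom (dvd_pow_self p hm) (ZMod p) u = 1 := by
  rw [← ZMod.pow_card_pow (n := n) (ZMod.castHom (dvd_pow_self p hm) (ZMod p) u), ← map_pow,
    ← Units.val_pow_eq_pow_val, hu, Units.val_one, map_one]

theorem ZMod.prime_dvd_unit_pow_sub_one (hm : m ≠ 0) {u : (ZMod (p ^ m))ˣ} (hu : u ^ p ^ n = 1)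
    (k : ℕ) : (p : ZMod (p ^ m)) ∣ (u : ZMod (p ^ m)) ^ k - 1 := by
  refine ((ZMod.castHom_eq_zero_iff_dvd (dvd_pow_self p hm) _).1 ?_).trans
    (by simpa using sub_dvd_pow_sub_pow (u : ZMod (p ^ m)) 1 k)
  rw [map_sub, ZMod.castHom_unit_eq_one_of_pow_eq_one hm hu, map_one, sub_self]

theorem ZMod.unit_pow_prime_pow_pred_eq_one (hn : n ≠ 0) {u : (ZMod (p ^ n))ˣ}
    (hu : u ^ p ^ n = 1) : u ^ p ^ (n - 1) = 1 := by
  have := dvd_sub_pow_of_dvd_sub (by simpa using ZMod.prime_dvd_unit_pow_sub_one hn hu 1) (n - 1)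
  rw [Nat.sub_add_cancel (Nat.pos_of_ne_zero hn), ZMod.natCast_pow_self_eq_zero, one_pow,
    zero_dvd_iff, sub_eq_zero] at this
  exact Units.ext (by rw [Units.val_pow_eq_pow_val, this, Units.val_one])

theorem ZMod.unit_pow_val_prime_pow_pred_mul_eq_one (hn : n ≠ 0) {u : (ZMod (p ^ n))ˣ}
    (hu : u ^ p ^ n = 1) (x : ZMod (p ^ n)) :
    (u : ZMod (p ^ n)) ^ ((p : ZMod (p ^ n)) ^ (n - 1) * x).val = 1 := by
  have hx : (p : ZMod (p ^ n)) ^ (n - 1) * x = (p ^ (n - 1)) • x := by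
    rw [nsmul_eq_mul, Nat.cast_pow]
  rw [← Units.val_pow_eq_pow_val, ← zmodUnitHom_ofAdd hu, hx, ofAdd_nsmul, map_pow,
    zmodUnitHom_ofAdd, ← pow_mul, mul_comm, pow_mul, ZMod.unit_pow_prime_pow_pred_eq_one hn hu,
    one_pow, Units.val_one]

theorem ZMod.prime_pow_pred_mul_unit_pow (hn : n ≠ 0) {u : (ZMod (p ^ n))ˣ} (hu : u ^ p ^ n = 1)
    (k : ℕ) :
    (p : ZMod (p ^ n)) ^ (n - 1) * (u : ZMod (p ^ n)) ^ k = (p : ZMod (p ^ n)) ^ (n - 1) := by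
  have := (ZMod.prime_pow_pred_mul_eq_zero_iff hn _).2 (ZMod.prime_dvd_unit_pow_sub_one hn hu k)
  rwa [mul_sub, mul_one, sub_eq_zero] at this

end UnitsOfPrimePowerOrder

namespace BeauvilleGroup

section

variable {p m n : ℕ} {lam : (ZMod (p ^ m))ˣ} {h : lam ^ (p ^ n) = 1}

instance [NeZero p] : Finite (BeauvilleGroup p m n lam h) :=
  Finite.of_equiv _ SemidirectProduct.equivProd.symm

def of (a : ZMod (p ^ m)) (x : ZMod (p ^ n)) : BeauvilleGroup p m n lam h := ⟨ofAdd a, ofAdd x⟩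

theorem exists_eq_of (g : BeauvilleGroup p m n lam h) : ∃ a x, g = of a x :=
  ⟨toAdd g.left, toAdd g.right, rfl⟩

theorem of_eq_one_iff {a : ZMod (p ^ m)} {x : ZMod (p ^ n)} :
    (of a x : BeauvilleGroup p m n lam h) = 1 ↔ a = 0 ∧ x = 0 :=
  SemidirectProduct.ext_iff

theorem of_mul_of [NeZero p] (a b : ZMod (p ^ m)) (x y : ZMod (p ^ n)) :
    (of a x : BeauvilleGroup p m n lam h) * of b y =
      of (a + (lam : ZMod (p ^ m)) ^ x.val * b) (x + y) := by
  rw [← Units.val_pow_eq_pow_val, ← zmodUnitHom_ofAdd h]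
  rfl

theorem of_pow [NeZero p] (a : ZMod (p ^ m)) (x : ZMod (p ^ n)) (k : ℕ) :
    (of a x : BeauvilleGroup p m n lam h) ^ k =
      of ((∑ i ∈ range k, ((lam : ZMod (p ^ m)) ^ x.val) ^ i) * a) ((k : ZMod (p ^ n)) * x) := by
  induction k with
  | zero => simp only [pow_zero, range_zero, sum_empty, zero_mul, Nat.cast_zero]; rfl
  | succ k ih =>
    rw [pow_succ', ih, of_mul_of, geom_sum_succ]
    congr 1 <;> push_cast <;> ring

theorem of_natCast_mul [NeZero p] (k : ℕ) (a : ZMod (p ^ m)) (x : ZMod (p ^ n)) :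
    (of (k * a) (k * x) : BeauvilleGroup p m n lam h) = of a 0 ^ k * of 0 x ^ k := by
  simp [of_pow, of_mul_of]

theorem of_pow_prime_pow [Fact p.Prime] (hodd : Odd p) (hm : m ≠ 0) (a : ZMod (p ^ m))
    (x : ZMod (p ^ n)) (t : ℕ) : ∃ w : ZMod (p ^ m), (of a x : BeauvilleGroup p m n lam h) ^ p ^ t =
      of ((p : ZMod (p ^ m)) ^ t * (1 + (p : ZMod (p ^ m)) * w) * a)
        ((p : ZMod (p ^ n)) ^ t * x) := by
  induction t with
  | zero => exact ⟨0, by simp⟩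
  | succ t ih =>
    obtain ⟨w, hw⟩ := ih
    obtain ⟨w', hw'⟩ := exists_geom_sum_eq_of_dvd_sub_one hodd
      (ZMod.prime_dvd_unit_pow_sub_one hm h ((p : ZMod (p ^ n)) ^ t * x).val)
    refine ⟨w + w' + p * w * w', ?_⟩
    rw [pow_succ, pow_mul, hw, of_pow, hw']
    congr 1 <;> ring

def leftModP [Fact p.Prime] (hm : m ≠ 0) :
    BeauvilleGroup p m n lam h →* Multiplicative (ZMod p) :=
  MonoidHom.mk' (fun g => ofAdd (ZMod.castHom (dvd_pow_self p hm) (ZMod p) (toAdd g.left)))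
    fun g g' => by
      obtain ⟨a, x, rfl⟩ := exists_eq_of g
      obtain ⟨b, y, rfl⟩ := exists_eq_of g'
      rw [of_mul_of]
      simp only [of, toAdd_mul, toAdd_ofAdd, map_add, map_mul, map_pow,
        ZMod.castHom_unit_eq_one_of_pow_eq_one hm h, one_pow, one_mul, ofAdd_add]

def rightModP (hn : n ≠ 0) : BeauvilleGroup p m n lam h →* Multiplicative (ZMod p) :=
  (ZMod.castHom (dvd_pow_self p hn) (ZMod p)).toAddMonoidHom.toMultiplicative.comp
    SemidirectProduct.rightHom

theorem leftModP_of [Fact p.Prime] (hm : m ≠ 0) (a : ZMod (p ^ m)) (x : ZMod (p ^ n)) :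
    leftModP hm (of a x : BeauvilleGroup p m n lam h) =
      ofAdd (ZMod.castHom (dvd_pow_self p hm) (ZMod p) a) :=
  rfl

theorem rightModP_of (hn : n ≠ 0) (a : ZMod (p ^ m)) (x : ZMod (p ^ n)) :
    rightModP hn (of a x : BeauvilleGroup p m n lam h) =
      ofAdd (ZMod.castHom (dvd_pow_self p hn) (ZMod p) x) :=
  rfl

theorem leftModP_surjective [Fact p.Prime] (hm : m ≠ 0) :
    Function.Surjective (leftModP hm : BeauvilleGroup p m n lam h →* _) := fun c => by
  obtain ⟨a, ha⟩ := ZMod.castHom_surjective (dvd_pow_self p hm) (toAdd c)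
  exact ⟨of a 0, by rw [leftModP_of, ha, ofAdd_toAdd]⟩

theorem rightModP_surjective (hn : n ≠ 0) :
    Function.Surjective (rightModP hn : BeauvilleGroup p m n lam h →* _) := fun c => by
  obtain ⟨x, hx⟩ := ZMod.castHom_surjective (dvd_pow_self p hn) (toAdd c)
  exact ⟨of 0 x, by rw [rightModP_of, hx, ofAdd_toAdd]⟩

end

variable {p n : ℕ} [Fact p.Prime] {lam : (ZMod (p ^ n))ˣ} {h : lam ^ (p ^ n) = 1}

theorem pow_prime_pow_eq_one (hodd : Odd p) (hn : n ≠ 0) (g : BeauvilleGroup p n n lam h) :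
    g ^ p ^ n = 1 := by
  obtain ⟨a, x, rfl⟩ := exists_eq_of g
  obtain ⟨w, hw⟩ := of_pow_prime_pow hodd hn a x n
  rw [hw, ZMod.natCast_pow_self_eq_zero, zero_mul, zero_mul, zero_mul]
  rfl

theorem of_pow_prime_pow_pred (hodd : Odd p) (hn : n ≠ 0) (a x : ZMod (p ^ n)) :
    (of a x : BeauvilleGroup p n n lam h) ^ p ^ (n - 1) =
      of ((p : ZMod (p ^ n)) ^ (n - 1) * a) ((p : ZMod (p ^ n)) ^ (n - 1) * x) := by
  obtain ⟨w, hw⟩ := of_pow_prime_pow hodd hn a x (n - 1)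
  rw [hw, mul_add, mul_one, ← mul_assoc, ← pow_succ, Nat.sub_add_cancel (Nat.pos_of_ne_zero hn),
    ZMod.natCast_pow_self_eq_zero, zero_mul, add_zero]

theorem pow_prime_pow_pred_mul_comm (hodd : Odd p) (hn : n ≠ 0)
    (g g' : BeauvilleGroup p n n lam h) : g ^ p ^ (n - 1) * g' = g' * g ^ p ^ (n - 1) := by
  obtain ⟨a, x, rfl⟩ := exists_eq_of g
  obtain ⟨b, y, rfl⟩ := exists_eq_of g'
  rw [of_pow_prime_pow_pred hodd hn, of_mul_of, of_mul_of,
    ZMod.unit_pow_val_prime_pow_pred_mul_eq_one hn h, mul_left_comm, ← mul_assoc,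
    ZMod.prime_pow_pred_mul_unit_pow hn h, one_mul, add_comm, add_comm y]

theorem mul_pow_prime_pow_pred (hodd : Odd p) (hn : n ≠ 0) (g g' : BeauvilleGroup p n n lam h) :
    (g * g') ^ p ^ (n - 1) = g ^ p ^ (n - 1) * g' ^ p ^ (n - 1) := by
  obtain ⟨a, x, rfl⟩ := exists_eq_of g
  obtain ⟨b, y, rfl⟩ := exists_eq_of g'
  rw [of_mul_of, of_pow_prime_pow_pred hodd hn, of_pow_prime_pow_pred hodd hn,
    of_pow_prime_pow_pred hodd hn, of_mul_of, ZMod.unit_pow_val_prime_pow_pred_mul_eq_one hn h,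
    one_mul, mul_add, mul_add, ← mul_assoc, ZMod.prime_pow_pred_mul_unit_pow hn h]

theorem isPGroup (hodd : Odd p) (hn : n ≠ 0) : IsPGroup p (BeauvilleGroup p n n lam h) :=
  fun g => ⟨n, pow_prime_pow_eq_one hodd hn g⟩

theorem mem_frattini_iff (hodd : Odd p) (hn : n ≠ 0) (g : BeauvilleGroup p n n lam h) :
    g ∈ frattini (BeauvilleGroup p n n lam h) ↔ g ^ p ^ (n - 1) = 1 := by
  obtain ⟨a, x, rfl⟩ := exists_eq_of g
  rw [of_pow_prime_pow_pred hodd hn, of_eq_one_iff, ZMod.prime_pow_pred_mul_eq_zero_iff hn,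
    ZMod.prime_pow_pred_mul_eq_zero_iff hn]
  constructor
  · intro hg
    have hcard : (Nat.card (Multiplicative (ZMod p))).Prime := by
      rw [Nat.card_congr toAdd, Nat.card_zmod]
      exact Fact.out
    have hl := frattini_le_coatom
      (MonoidHom.isCoatom_ker_of_surjective (leftModP_surjective hn) hcard) hg
    have hr := frattini_le_coatom
      (MonoidHom.isCoatom_ker_of_surjective (rightModP_surjective hn) hcard) hg
    rw [MonoidHom.mem_ker, leftModP_of, ofAdd_eq_one, ZMod.castHom_eq_zero_iff_dvd] at hl
    rw [MonoidHom.mem_ker, rightModP_of, ofAdd_eq_one, ZMod.castHom_eq_zero_iff_dvd] at hr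
    exact ⟨hl, hr⟩
  · rintro ⟨⟨a, rfl⟩, ⟨x, rfl⟩⟩
    rw [of_natCast_mul]
    exact mul_mem ((isPGroup hodd hn).pow_mem_frattini _) ((isPGroup hodd hn).pow_mem_frattini _)

theorem not_isCyclic (hodd : Odd p) (hn : n ≠ 0) : ¬IsCyclic (BeauvilleGroup p n n lam h) := by
  intro hcyc
  have hcard : Nat.card (BeauvilleGroup p n n lam h) = p ^ n * p ^ n := by
    rw [Nat.card_congr SemidirectProduct.equivProd, Nat.card_prod, Nat.card_congr toAdd,
      Nat.card_zmod]
  have hdvd : p ^ n * p ^ n ∣ p ^ n := hcard ▸ hcyc.exponent_eq_card ▸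
    Monoid.exponent_dvd_of_forall_pow_eq_one (pow_prime_pow_eq_one hodd hn)
  have hpn : 1 < p ^ n := Nat.one_lt_pow hn (Fact.out : p.Prime).one_lt
  have := Nat.le_of_dvd (by positivity) hdvd
  nlinarith

end BeauvilleGroup

/-- For `G = G(λ,n,n)`, odd `p`, a pair of triples with product one is an
unmixed Beauville structure on `G` if and only if its image under the quotient map by the
Frattini subgroup is an unmixed Beauville structure on `G/Φ(G)`. -/
theorem beauville_iff_beauville_frattini_quotient
    (p n : ℕ) (hp : p.Prime) (hodd : Odd p) (hn : 1 ≤ n)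
    (lam : (ZMod (p ^ n))ˣ) (h : lam ^ (p ^ n) = 1)
    (x y z a b c : BeauvilleGroup p n n lam h)
    (hxyz : x * y * z = 1) (habc : a * b * c = 1) :
    IsBeauvilleStructure x y z a b c ↔
      IsBeauvilleStructure
        (QuotientGroup.mk' (frattini (BeauvilleGroup p n n lam h)) x)
        (QuotientGroup.mk' (frattini (BeauvilleGroup p n n lam h)) y)
        (QuotientGroup.mk' (frattini (BeauvilleGroup p n n lam h)) z)
        (QuotientGroup.mk' (frattini (BeauvilleGroup p n n lam h)) a)
        (QuotientGroup.mk' (frattini (BeauvilleGroup p n n lam h)) b)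
        (QuotientGroup.mk' (frattini (BeauvilleGroup p n n lam h)) c) := by
  have : Fact p.Prime := ⟨hp⟩
  have hn₀ : n ≠ 0 := Nat.one_le_iff_ne_zero.1 hn
  have hexp (g : BeauvilleGroup p n n lam h) : g ^ p ^ (n - 1 + 1) = 1 := by
    rw [Nat.sub_add_cancel hn]
    exact BeauvilleGroup.pow_prime_pow_eq_one hodd hn₀ g
  exact isBeauvilleStructure_iff_frattini_quotient hp (BeauvilleGroup.not_isCyclic hodd hn₀)
    (BeauvilleGroup.mul_pow_prime_pow_pred hodd hn₀)
    (BeauvilleGroup.pow_prime_pow_pred_mul_comm hodd hn₀) hexp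
    (BeauvilleGroup.mem_frattini_iff hodd hn₀) hxyz habc
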